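/- Iteration lemma for the moment bounds: Let n ≥ 2, κ = n/(n−1), K ≥ 1, and set p_i = 2·κ^i for i ∈ ℕ. There is a constant C > 0 depending only on n such that for every sequence (a_i)_{i∈ℕ} of nonnegative reals satisfying a_{i+1} ≤ (K·p_i)^{1/p_i} · (a_i + p_i) for all i ≥ 0, one has a_{k+1} ≤ C · K^{n/2} · (a_0 + p_k) for all k ≥ 0. -/

import Mathlib

/-!
Unrolling the recursion gives `a (k+1) ≤ (∏ Mᵢ) · (a 0 + ∑ pᵢ)` with `Mᵢ = (K pᵢ)^{1/pᵢ} ≥ 1`.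
Since `κ` and `n` are conjugate exponents, `∑ 1/pᵢ ≤ n/2`, so the `K`-part of the product is at
most `K^{n/2}`; the rest is `exp (∑ log pᵢ / pᵢ)`, bounded because `log pᵢ / pᵢ ≤ 2 / √pᵢ` decays
geometrically. Finally `∑_{i ≤ k} pᵢ ≤ n pₖ`.
-/

open Finset Real

lemma le_prod_mul_add_sum_of_le_mul_add {a M p : ℕ → ℝ} (hM : ∀ i, 1 ≤ M i) (hp : ∀ i, 0 ≤ p i)
    (hrec : ∀ i, a (i + 1) ≤ M i * (a i + p i)) (m : ℕ) :
    a m ≤ (∏ i ∈ range m, M i) * (a 0 + ∑ i ∈ range m, p i) := by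
  induction m with
  | zero => simp
  | succ m ih =>
    have hP : 1 ≤ ∏ i ∈ range m, M i := one_le_prod fun i _ => hM i
    calc a (m + 1) ≤ M m * (a m + p m) := hrec m
      _ ≤ M m * ((∏ i ∈ range m, M i) * (a 0 + ∑ i ∈ range m, p i)
            + (∏ i ∈ range m, M i) * p m) := by
        have := hM m
        gcongr
        exact le_mul_of_one_le_left (hp m) hP
      _ = (∏ i ∈ range (m + 1), M i) * (a 0 + ∑ i ∈ range (m + 1), p i) := by
        rw [prod_range_succ, sum_range_succ]; ring

lemma log_div_le_two_div_sqrt {x : ℝ} (hx : 0 < x) : log x / x ≤ 2 / √x := by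
  have hlog : log x ≤ 2 * √x := by
    have := log_le_rpow_div hx.le one_half_pos
    rw [← sqrt_eq_rpow] at this
    linarith
  rw [div_le_div_iff₀ hx (sqrt_pos.2 hx)]
  nlinarith [mul_self_sqrt hx.le, sqrt_nonneg x]

lemma geom_sum_le_inv_one_sub {x : ℝ} (hx₀ : 0 ≤ x) (hx₁ : x < 1) (m : ℕ) :
    ∑ i ∈ range m, x ^ i ≤ (1 - x)⁻¹ := by
  simpa only [range_eq_Ico, pow_zero, one_div] using
    geom_sum_Ico_le_of_lt_one (m := 0) (n := m) hx₀ hx₁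

section GeometricExponents

variable {κ q : ℝ}

lemma sum_range_one_div_two_mul_pow_le (h : κ.HolderConjugate q) (m : ℕ) :
    ∑ i ∈ range m, 1 / (2 * κ ^ i) ≤ q / 2 := by
  have hgeom := geom_sum_le_inv_one_sub h.inv_nonneg (inv_lt_one_of_one_lt₀ h.lt) m
  rw [h.one_sub_inv, inv_inv] at hgeom
  calc ∑ i ∈ range m, 1 / (2 * κ ^ i) = (∑ i ∈ range m, κ⁻¹ ^ i) / 2 := by
        rw [Finset.sum_div]; congr! 1 with i; rw [inv_pow]; field_simp
    _ ≤ q / 2 := by gcongr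

lemma sum_range_succ_two_mul_pow_le (h : κ.HolderConjugate q) (k : ℕ) :
    ∑ i ∈ range (k + 1), 2 * κ ^ i ≤ q * (2 * κ ^ k) := by
  have hκ := h.sub_one_pos
  rw [← Finset.mul_sum, geom_sum_eq h.lt.ne', h.conjugate_eq]
  have : κ ^ (k + 1) - 1 ≤ κ ^ k * κ := by rw [pow_succ]; linarith
  calc 2 * ((κ ^ (k + 1) - 1) / (κ - 1)) ≤ 2 * (κ ^ k * κ / (κ - 1)) := by gcongr
    _ = κ / (κ - 1) * (2 * κ ^ k) := by ring

lemma sum_range_log_div_two_mul_pow_le (hκ : 1 < κ) (m : ℕ) :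
    ∑ i ∈ range m, log (2 * κ ^ i) / (2 * κ ^ i) ≤ 2 * (1 - (√κ)⁻¹)⁻¹ := by
  have hs : 1 < √κ := by rwa [lt_sqrt zero_le_one, one_pow]
  have hterm (i : ℕ) : log (2 * κ ^ i) / (2 * κ ^ i) ≤ 2 * (√κ)⁻¹ ^ i := by
    have hle : √κ ^ i ≤ √(2 * κ ^ i) := by
      rw [le_sqrt (by positivity) (by positivity), ← pow_mul, mul_comm, pow_mul,
        sq_sqrt (by linarith)]
      linarith [pow_pos (by linarith : 0 < κ) i]
    calc log (2 * κ ^ i) / (2 * κ ^ i) ≤ 2 / √(2 * κ ^ i) :=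
          log_div_le_two_div_sqrt (by positivity)
      _ ≤ 2 / √κ ^ i := by gcongr
      _ = 2 * (√κ)⁻¹ ^ i := by rw [inv_pow, div_eq_mul_inv]
  calc ∑ i ∈ range m, log (2 * κ ^ i) / (2 * κ ^ i) ≤ ∑ i ∈ range m, 2 * (√κ)⁻¹ ^ i :=
        sum_le_sum fun i _ => hterm i
    _ ≤ 2 * (1 - (√κ)⁻¹)⁻¹ := by
        rw [← Finset.mul_sum]
        gcongr
        exact geom_sum_le_inv_one_sub (by positivity) (inv_lt_one_of_one_lt₀ hs) m

lemma prod_range_mul_two_mul_pow_rpow_le (h : κ.HolderConjugate q) {K : ℝ} (hK : 1 ≤ K)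
    (m : ℕ) :
    ∏ i ∈ range m, (K * (2 * κ ^ i)) ^ (1 / (2 * κ ^ i)) ≤
      K ^ (q / 2) * exp (2 * (1 - (√κ)⁻¹)⁻¹) := by
  have hκ := h.pos
  have hpow (i : ℕ) : (2 * κ ^ i) ^ (1 / (2 * κ ^ i)) = exp (log (2 * κ ^ i) / (2 * κ ^ i)) := by
    rw [rpow_def_of_pos (by positivity), mul_one_div]
  calc ∏ i ∈ range m, (K * (2 * κ ^ i)) ^ (1 / (2 * κ ^ i))
      = K ^ (∑ i ∈ range m, 1 / (2 * κ ^ i)) *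
          exp (∑ i ∈ range m, log (2 * κ ^ i) / (2 * κ ^ i)) := by
        rw [rpow_sum_of_pos (by linarith), exp_sum, ← prod_mul_distrib]
        exact prod_congr rfl fun i _ => by rw [mul_rpow (by linarith) (by positivity), hpow]
    _ ≤ K ^ (q / 2) * exp (2 * (1 - (√κ)⁻¹)⁻¹) := by
        gcongr
        · exact sum_range_one_div_two_mul_pow_le h m
        · exact sum_range_log_div_two_mul_pow_le h.lt m

theorem le_mul_rpow_mul_add_of_le_rpow_mul_add (h : κ.HolderConjugate q) {K : ℝ} (hK : 1 ≤ K)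
    {a : ℕ → ℝ} (ha₀ : 0 ≤ a 0)
    (hrec : ∀ i, a (i + 1) ≤ (K * (2 * κ ^ i)) ^ (1 / (2 * κ ^ i)) * (a i + 2 * κ ^ i))
    (k : ℕ) :
    a (k + 1) ≤ q * exp (2 * (1 - (√κ)⁻¹)⁻¹) * K ^ (q / 2) * (a 0 + 2 * κ ^ k) := by
  have hκ := h.pos
  have hq := h.symm.lt
  have hM (i : ℕ) : 1 ≤ (K * (2 * κ ^ i)) ^ (1 / (2 * κ ^ i)) :=
    one_le_rpow (one_le_mul_of_one_le_of_one_le hK (by nlinarith [one_le_pow₀ h.lt.le (n := i)]))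
      (by positivity)
  have hsum := sum_range_succ_two_mul_pow_le h k
  calc a (k + 1) ≤ (∏ i ∈ range (k + 1), (K * (2 * κ ^ i)) ^ (1 / (2 * κ ^ i))) *
        (a 0 + ∑ i ∈ range (k + 1), 2 * κ ^ i) :=
        le_prod_mul_add_sum_of_le_mul_add hM (fun i => by positivity) hrec (k + 1)
    _ ≤ K ^ (q / 2) * exp (2 * (1 - (√κ)⁻¹)⁻¹) * (a 0 + q * (2 * κ ^ k)) := by
        gcongr
        exact prod_range_mul_two_mul_pow_rpow_le h hK (k + 1)
    _ ≤ K ^ (q / 2) * exp (2 * (1 - (√κ)⁻¹)⁻¹) * (q * (a 0 + 2 * κ ^ k)) := by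
        gcongr
        nlinarith
    _ = q * exp (2 * (1 - (√κ)⁻¹)⁻¹) * K ^ (q / 2) * (a 0 + 2 * κ ^ k) := by ring

end GeometricExponents

/-- iteration lemma for the moment bounds. Let `n ≥ 2`, `κ = n/(n−1)`,
`K ≥ 1`, and `p_i = 2·κⁱ`. There is a constant `C > 0` depending only on `n` such that for
every sequence `(a_i)` of nonnegative reals with `a_{i+1} ≤ (K·p_i)^{1/p_i} · (a_i + p_i)`
for all `i ≥ 0`, one has `a_{k+1} ≤ C · K^{n/2} · (a_0 + p_k)` for all `k ≥ 0`. -/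
theorem iteration_lemma_moment_bounds (n : ℕ) (hn : 2 ≤ n) :
    ∃ C : ℝ, 0 < C ∧
      ∀ K : ℝ, 1 ≤ K →
      ∀ a : ℕ → ℝ, (∀ i, 0 ≤ a i) →
      (∀ i : ℕ, a (i + 1) ≤
        (K * (2 * ((n : ℝ)/((n : ℝ) - 1)) ^ i)) ^ (1 / (2 * ((n : ℝ)/((n : ℝ) - 1)) ^ i)) *
          (a i + 2 * ((n : ℝ)/((n : ℝ) - 1)) ^ i)) →
      ∀ k : ℕ, a (k + 1) ≤ C * K ^ ((n : ℝ) / 2) * (a 0 + 2 * ((n : ℝ)/((n : ℝ) - 1)) ^ k) := by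
  have h : (conjExponent (n : ℝ)).HolderConjugate n :=
    (HolderConjugate.conjExponent (by exact_mod_cast hn)).symm
  exact ⟨n * exp (2 * (1 - (√(conjExponent n))⁻¹)⁻¹), mul_pos h.symm.pos (exp_pos _),
    fun K hK a ha hrec k => le_mul_rpow_mul_add_of_le_rpow_mul_add h hK (ha 0) hrec k⟩
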